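/- Assume consistency, ignorability, positivity, and the treatment-conditional measurement error model with parameters α_t, β_t ∈ [0,1), α_t + β_t < 1. Fix t ∈ {0,1}, and suppose the min and max anchor assumptions hold for the target potential outcome: min over x with P(X = x) > 0 of P(Y*_t = 1 | X = x) equals 0, and max over such x of P(Y*_t = 1 | X = x) equals 1. Then the error parameters are identified from the observational distribution: α_t = min over x with P(X = x) > 0 of P(Y = 1 | X = x, T = t), and β_t = 1 − max over such x of P(Y = 1 | X = x, T = t). -/

import Mathlib

open scoped Classical
open Finset

/-- Probability of an event under a probability mass function `P` on a finite sample space. -/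
noncomputable def pr {Ω : Type*} [Fintype Ω] (P : Ω → ℝ) (A : Set Ω) : ℝ :=
  ∑ ω : Ω, if ω ∈ A then P ω else 0

/-- Conditional probability `P(A | B) = P(A ∩ B) / P(B)`. -/
noncomputable def cpr {Ω : Type*} [Fintype Ω] (P : Ω → ℝ) (A B : Set Ω) : ℝ :=
  pr P (A ∩ B) / pr P B

/-- Expectation of a real random variable. -/
noncomputable def ex {Ω : Type*} [Fintype Ω] (P : Ω → ℝ) (Z : Ω → ℝ) : ℝ :=
  ∑ ω : Ω, P ω * Z ω

/-- Conditional expectation `E[Z | B]`. -/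
noncomputable def cex {Ω : Type*} [Fintype Ω] (P : Ω → ℝ) (Z : Ω → ℝ) (B : Set Ω) : ℝ :=
  (∑ ω : Ω, if ω ∈ B then P ω * Z ω else 0) / pr P B

/-! Conditionally on `X = x`, ignorability lets one drop the conditioning on `T = t`, so the
observed proxy in arm `t` has the law of the proxy potential outcome `Y_t`; splitting on `Y*_t`,
the measurement error model gives
`P(Y = 1 | X = x, T = t) = α_t + (1 - α_t - β_t) P(Y*_t = 1 | X = x)`.
As `1 - α_t - β_t > 0`, this affine map is monotone, so it sends the anchors `0` and `1` of the
target class probabilities to the minimum `α_t` and the maximum `1 - β_t` of the observed ones. -/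

section FiniteProbability

variable {Ω : Type*} [Fintype Ω] (P : Ω → ℝ)

lemma pr_nonneg (hP : ∀ ω, 0 ≤ P ω) (A : Set Ω) : 0 ≤ pr P A :=
  Finset.sum_nonneg fun ω _ => by split_ifs <;> simp [hP ω]

lemma pr_mono (hP : ∀ ω, 0 ≤ P ω) {A B : Set Ω} (h : A ⊆ B) : pr P A ≤ pr P B :=
  Finset.sum_le_sum fun ω _ => by
    by_cases hA : ω ∈ A
    · simp [hA, h hA]
    · split_ifs <;> simp [hP ω]

lemma pr_inter_add_compl_inter (A B : Set Ω) : pr P (B ∩ A) + pr P (Bᶜ ∩ A) = pr P A := by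
  unfold pr
  rw [← Finset.sum_add_distrib]
  refine Finset.sum_congr rfl fun ω _ => ?_
  by_cases hB : ω ∈ B <;> simp [hB]

lemma cpr_compl {A B : Set Ω} (hB : pr P B ≠ 0) : cpr P Aᶜ B = 1 - cpr P A B := by
  have h := pr_inter_add_compl_inter P B A
  unfold cpr
  field_simp
  linarith

lemma pr_inter_eq_mul_of_cpr_eq (hP : ∀ ω, 0 ≤ P ω) {A B : Set Ω} {c : ℝ}
    (h : 0 < pr P B → cpr P A B = c) : pr P (A ∩ B) = c * pr P B := by
  rcases (pr_nonneg P hP B).eq_or_lt with hB | hB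
  · have := pr_mono P hP (Set.inter_subset_right (s := A) (t := B))
    have := pr_nonneg P hP (A ∩ B)
    rw [← hB]
    linarith
  · rw [← h hB, cpr, div_mul_cancel₀ _ hB.ne']

lemma pr_preimage_inter_eq_sum {β : Type*} [Fintype β] (V : Ω → β) (S : Set β) (A : Set Ω) :
    pr P (V ⁻¹' S ∩ A) = ∑ v ∈ S.toFinset, pr P ({ω | V ω = v} ∩ A) := by
  unfold pr
  rw [Finset.sum_comm]
  refine Finset.sum_congr rfl fun ω _ => ?_
  simp [ite_and, Finset.sum_ite_eq]

lemma cpr_preimage_inter_eq_mul {β : Type*} [Fintype β] (V : Ω → β) {B C : Set Ω}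
    (hV : ∀ v, cpr P ({ω | V ω = v} ∩ B) C = cpr P {ω | V ω = v} C * cpr P B C) (S : Set β) :
    cpr P (V ⁻¹' S ∩ B) C = cpr P (V ⁻¹' S) C * cpr P B C := by
  unfold cpr at hV ⊢
  simp only [Set.inter_assoc] at hV ⊢
  rw [pr_preimage_inter_eq_sum, pr_preimage_inter_eq_sum, Finset.sum_div,
    Finset.sum_div, Finset.sum_mul]
  exact Finset.sum_congr rfl fun v _ => hV v

lemma cpr_inter_left_eq_of_indep {A B C : Set Ω}
    (h : cpr P (A ∩ B) C = cpr P A C * cpr P B C) (hB : cpr P B C ≠ 0) :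
    cpr P A (B ∩ C) = cpr P A C := by
  have hC : pr P C ≠ 0 := fun hC => hB (by rw [cpr, hC, div_zero])
  have hBC : pr P (B ∩ C) ≠ 0 := fun hBC => hB (by rw [cpr, hBC, zero_div])
  unfold cpr at h hB ⊢
  rw [← Set.inter_assoc]
  field_simp at h ⊢
  exact h

/-- `a` and `b` are the false positive and false negative rates, within `C`, of the proxy event
`A` for the target event `S`. -/
lemma cpr_eq_of_misclassification (hP : ∀ ω, 0 ≤ P ω) {A S C : Set Ω} {a b : ℝ}
    (hC : pr P C ≠ 0)
    (ha : 0 < pr P (Sᶜ ∩ C) → cpr P A (Sᶜ ∩ C) = a)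
    (hb : 0 < pr P (S ∩ C) → cpr P Aᶜ (S ∩ C) = b) :
    cpr P A C = a + (1 - a - b) * cpr P S C := by
  have hfp := pr_inter_eq_mul_of_cpr_eq P hP ha
  have hfn := pr_inter_eq_mul_of_cpr_eq P hP hb
  have hS := pr_inter_add_compl_inter P C S
  have hAS := pr_inter_add_compl_inter P (S ∩ C) A
  have hA := pr_inter_add_compl_inter P (A ∩ C) S
  rw [Set.inter_left_comm S, Set.inter_left_comm Sᶜ] at hA
  unfold cpr
  field_simp
  linear_combination -hA + hAS - hfn + hfp + a * hS

end FiniteProbability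

lemma setOf_eq_zero_eq_compl_setOf_eq_one {Ω : Type*} (f : Ω → Fin 2) :
    {ω | f ω = 0} = {ω | f ω = 1}ᶜ := by
  ext ω
  simp only [Set.mem_ofPred_eq, Set.mem_compl_iff]
  omega

lemma cpr_observed_eq_affine_target {Ω 𝒳 : Type*} [Fintype Ω] (P : Ω → ℝ)
    (hP0 : ∀ ω, 0 ≤ P ω) (X : Ω → 𝒳) (T : Ω → Fin 2) (Ys Yp : Fin 2 → Ω → Fin 2) (Y : Ω → Fin 2)
    (hcons : ∀ ω, Y ω = Yp (T ω) ω) (x : 𝒳) (t : Fin 2)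
    (hig : ∀ a b c d : Fin 2,
      cpr P ({ω | Ys 0 ω = a ∧ Ys 1 ω = b ∧ Yp 0 ω = c ∧ Yp 1 ω = d} ∩ {ω | T ω = t})
          {ω | X ω = x}
        = cpr P {ω | Ys 0 ω = a ∧ Ys 1 ω = b ∧ Yp 0 ω = c ∧ Yp 1 ω = d} {ω | X ω = x}
          * cpr P {ω | T ω = t} {ω | X ω = x})
    (hpos : 0 < cpr P {ω | T ω = 1} {ω | X ω = x} ∧ cpr P {ω | T ω = 1} {ω | X ω = x} < 1)
    {a b : ℝ}
    (ha : 0 < pr P {ω | Ys t ω = 0 ∧ X ω = x} →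
      cpr P {ω | Yp t ω = 1} {ω | Ys t ω = 0 ∧ X ω = x} = a)
    (hb : 0 < pr P {ω | Ys t ω = 1 ∧ X ω = x} →
      cpr P {ω | Yp t ω = 0} {ω | Ys t ω = 1 ∧ X ω = x} = b) :
    cpr P {ω | Y ω = 1} {ω | X ω = x ∧ T ω = t}
      = a + (1 - a - b) * cpr P {ω | Ys t ω = 1} {ω | X ω = x} := by
  have hx : pr P {ω | X ω = x} ≠ 0 := fun hx => hpos.1.ne' (by rw [cpr, hx, div_zero])
  have hT : cpr P {ω | T ω = t} {ω | X ω = x} ≠ 0 := by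
    obtain rfl | rfl : t = 0 ∨ t = 1 := by omega
    · rw [setOf_eq_zero_eq_compl_setOf_eq_one, cpr_compl P hx]
      linarith [hpos.2]
    · exact hpos.1.ne'
  -- `(Y*₀, Y*₁, Y₀, Y₁)` as one discrete variable, so that ignorability passes from its atoms
  -- to the event `{Y_t = 1}`
  have hindep : cpr P ({ω | Yp t ω = 1} ∩ {ω | T ω = t}) {ω | X ω = x}
      = cpr P {ω | Yp t ω = 1} {ω | X ω = x} * cpr P {ω | T ω = t} {ω | X ω = x} :=
    cpr_preimage_inter_eq_mul P (fun ω => (fun s => Ys s ω, fun s => Yp s ω)) (fun v => by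
      convert hig (v.1 0) (v.1 1) (v.2 0) (v.2 1) using 3 <;>
        ext ω <;> simp [Prod.ext_iff, funext_iff, Fin.forall_fin_two, and_assoc])
    {v | v.2 t = 1}
  have hobs : cpr P {ω | Y ω = 1} {ω | X ω = x ∧ T ω = t}
      = cpr P {ω | Yp t ω = 1} ({ω | T ω = t} ∩ {ω | X ω = x}) := by
    have hset : {ω | X ω = x ∧ T ω = t} = {ω | T ω = t} ∩ {ω | X ω = x} := by
      ext ω
      exact and_comm
    rw [cpr, cpr, hset]
    congr 2
    ext ω
    simp only [Set.mem_inter_iff, Set.mem_ofPred_eq]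
    constructor <;> rintro ⟨hY, rfl, hX⟩ <;> simp_all
  rw [hobs, cpr_inter_left_eq_of_indep P hindep hT]
  refine cpr_eq_of_misclassification P hP0 hx ?_ ?_
  · rwa [← setOf_eq_zero_eq_compl_setOf_eq_one]
  · rwa [← setOf_eq_zero_eq_compl_setOf_eq_one]

lemma image_setOf_exists_and_eq {ι α β : Type*} (f : α → β) (Q : ι → Prop) (g : ι → α) :
    f '' {p | ∃ i, Q i ∧ p = g i} = {q | ∃ i, Q i ∧ q = f (g i)} := by
  ext q
  constructor
  · rintro ⟨p, ⟨i, hi, rfl⟩, rfl⟩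
    exact ⟨i, hi, rfl⟩
  · rintro ⟨i, hi, rfl⟩
    exact ⟨g i, ⟨i, hi, rfl⟩, rfl⟩

theorem error_params_identified_from_observational_data_general
    {Ω 𝒳 : Type*} [Fintype Ω]
    (P : Ω → ℝ) (hP0 : ∀ ω, 0 ≤ P ω)
    (X : Ω → 𝒳) (T : Ω → Fin 2)
    -- target potential outcomes `Ys t` and proxy potential outcomes `Yp t`, `t ∈ {0,1}`
    (Ys Yp : Fin 2 → Ω → Fin 2)
    -- consistency: the observed proxy outcome
    (Y : Ω → Fin 2) (hcons : ∀ ω, Y ω = Yp (T ω) ω)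
    -- ignorability: `(Y*₀, Y*₁, Y₀, Y₁) ⟂ T | X = x`
    (hig : ∀ x : 𝒳, 0 < pr P {ω | X ω = x} →
      ∀ a b c d t : Fin 2,
        cpr P ({ω | Ys 0 ω = a ∧ Ys 1 ω = b ∧ Yp 0 ω = c ∧ Yp 1 ω = d} ∩ {ω | T ω = t})
            {ω | X ω = x}
          = cpr P {ω | Ys 0 ω = a ∧ Ys 1 ω = b ∧ Yp 0 ω = c ∧ Yp 1 ω = d} {ω | X ω = x}
            * cpr P {ω | T ω = t} {ω | X ω = x})
    -- positivity
    (hpos : ∀ x : 𝒳, 0 < pr P {ω | X ω = x} →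
      0 < cpr P {ω | T ω = 1} {ω | X ω = x} ∧ cpr P {ω | T ω = 1} {ω | X ω = x} < 1)
    -- treatment-conditional measurement error model
    (α β : Fin 2 → ℝ)
    (hαβ : ∀ t, α t + β t < 1)
    (hme : ∀ (t : Fin 2) (x : 𝒳), 0 < pr P {ω | X ω = x} →
      (0 < pr P {ω | Ys t ω = 0 ∧ X ω = x} →
        cpr P {ω | Yp t ω = 1} {ω | Ys t ω = 0 ∧ X ω = x} = α t) ∧
      (0 < pr P {ω | Ys t ω = 1 ∧ X ω = x} →
        cpr P {ω | Yp t ω = 0} {ω | Ys t ω = 1 ∧ X ω = x} = β t))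
    (t : Fin 2)
    -- min anchor: some covariate value attains target class probability 0
    (hmin : IsLeast {p : ℝ | ∃ x : 𝒳, 0 < pr P {ω | X ω = x} ∧
      p = cpr P {ω | Ys t ω = 1} {ω | X ω = x}} 0)
    -- max anchor: some covariate value attains target class probability 1
    (hmax : IsGreatest {p : ℝ | ∃ x : 𝒳, 0 < pr P {ω | X ω = x} ∧
      p = cpr P {ω | Ys t ω = 1} {ω | X ω = x}} 1) :
    IsLeast {p : ℝ | ∃ x : 𝒳, 0 < pr P {ω | X ω = x} ∧
      p = cpr P {ω | Y ω = 1} {ω | X ω = x ∧ T ω = t}} (α t) ∧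
    IsGreatest {p : ℝ | ∃ x : 𝒳, 0 < pr P {ω | X ω = x} ∧
      p = cpr P {ω | Y ω = 1} {ω | X ω = x ∧ T ω = t}} (1 - β t) := by
  set f : ℝ → ℝ := fun p => α t + (1 - α t - β t) * p
  have hf_mono : Monotone f := fun p q hpq => by
    simp only [f]
    gcongr
    linarith [hαβ t]
  have hobs : {p : ℝ | ∃ x : 𝒳, 0 < pr P {ω | X ω = x} ∧
      p = cpr P {ω | Y ω = 1} {ω | X ω = x ∧ T ω = t}}
      = f '' {p : ℝ | ∃ x : 𝒳, 0 < pr P {ω | X ω = x} ∧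
          p = cpr P {ω | Ys t ω = 1} {ω | X ω = x}} := by
    rw [image_setOf_exists_and_eq]
    refine Set.ext fun p => exists_congr fun x => and_congr_right fun hx => ?_
    rw [cpr_observed_eq_affine_target P hP0 X T Ys Yp Y hcons x t
      (fun a b c d => hig x hx a b c d t) (hpos x hx) (hme t x hx).1 (hme t x hx).2]
  rw [hobs]
  have hf_zero : f 0 = α t := by simp only [f]; ring
  have hf_one : f 1 = 1 - β t := by simp only [f]; ring
  exact ⟨hf_zero ▸ hf_mono.map_isLeast hmin, hf_one ▸ hf_mono.map_isGreatest hmax⟩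

/-- Under consistency, ignorability, positivity and the treatment-conditional
measurement error model, if the min and max anchor assumptions hold for the target potential
outcome under treatment `t` (the minimum of `P(Y*_t = 1 | X = x)` over covariate values with
positive probability is `0` and the maximum is `1`), then the error parameters are identified
from the observational distribution: `α_t` is the minimum of `P(Y = 1 | X = x, T = t)` over such
`x`, and `β_t` is one minus the maximum. Minima and maxima of sets are expressed via `IsLeast`
and `IsGreatest`. -/
theorem error_params_identified_from_observational_data
    {Ω 𝒳 : Type*} [Fintype Ω] [Fintype 𝒳] [Nonempty 𝒳]
    (P : Ω → ℝ) (hP0 : ∀ ω, 0 ≤ P ω) (hP1 : ∑ ω : Ω, P ω = 1)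
    (X : Ω → 𝒳) (T : Ω → Fin 2)
    -- target potential outcomes `Ys t` and proxy potential outcomes `Yp t`, `t ∈ {0,1}`
    (Ys Yp : Fin 2 → Ω → Fin 2)
    -- consistency: the observed proxy outcome
    (Y : Ω → Fin 2) (hcons : ∀ ω, Y ω = Yp (T ω) ω)
    -- ignorability: `(Y*₀, Y*₁, Y₀, Y₁) ⟂ T | X = x`
    (hig : ∀ x : 𝒳, 0 < pr P {ω | X ω = x} →
      ∀ a b c d t : Fin 2,
        cpr P ({ω | Ys 0 ω = a ∧ Ys 1 ω = b ∧ Yp 0 ω = c ∧ Yp 1 ω = d} ∩ {ω | T ω = t})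
            {ω | X ω = x}
          = cpr P {ω | Ys 0 ω = a ∧ Ys 1 ω = b ∧ Yp 0 ω = c ∧ Yp 1 ω = d} {ω | X ω = x}
            * cpr P {ω | T ω = t} {ω | X ω = x})
    -- positivity
    (hpos : ∀ x : 𝒳, 0 < pr P {ω | X ω = x} →
      0 < cpr P {ω | T ω = 1} {ω | X ω = x} ∧ cpr P {ω | T ω = 1} {ω | X ω = x} < 1)
    -- treatment-conditional measurement error model
    (α β : Fin 2 → ℝ)
    (hα : ∀ t, α t ∈ Set.Ico (0:ℝ) 1) (hβ : ∀ t, β t ∈ Set.Ico (0:ℝ) 1)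
    (hαβ : ∀ t, α t + β t < 1)
    (hme : ∀ (t : Fin 2) (x : 𝒳), 0 < pr P {ω | X ω = x} →
      (0 < pr P {ω | Ys t ω = 0 ∧ X ω = x} →
        cpr P {ω | Yp t ω = 1} {ω | Ys t ω = 0 ∧ X ω = x} = α t) ∧
      (0 < pr P {ω | Ys t ω = 1 ∧ X ω = x} →
        cpr P {ω | Yp t ω = 0} {ω | Ys t ω = 1 ∧ X ω = x} = β t))
    (t : Fin 2)
    -- min anchor: some covariate value attains target class probability 0
    (hmin : IsLeast {p : ℝ | ∃ x : 𝒳, 0 < pr P {ω | X ω = x} ∧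
      p = cpr P {ω | Ys t ω = 1} {ω | X ω = x}} 0)
    -- max anchor: some covariate value attains target class probability 1
    (hmax : IsGreatest {p : ℝ | ∃ x : 𝒳, 0 < pr P {ω | X ω = x} ∧
      p = cpr P {ω | Ys t ω = 1} {ω | X ω = x}} 1) :
    IsLeast {p : ℝ | ∃ x : 𝒳, 0 < pr P {ω | X ω = x} ∧
      p = cpr P {ω | Y ω = 1} {ω | X ω = x ∧ T ω = t}} (α t) ∧
    IsGreatest {p : ℝ | ∃ x : 𝒳, 0 < pr P {ω | X ω = x} ∧
      p = cpr P {ω | Y ω = 1} {ω | X ω = x ∧ T ω = t}} (1 - β t) :=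
  error_params_identified_from_observational_data_general P hP0 X T Ys Yp Y hcons hig hpos α β hαβ
    hme t hmin hmax
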